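/- Let a, b, c, d, e, f be positive real numbers with a*c > e^2. Then the function F(x) = a*x + b - (e*x + f)^2 / (c*x + d) is strictly monotonically increasing on [0, ∞). -/
import Mathlib


theorem stmt_0 (a b c d e f : ℝ) (ha : 0 < a) (hb : 0 < b) (hc : 0 < c)
    (hd : 0 < d) (he : 0 < e) (hf : 0 < f) (h : e ^ 2 < a * c) :
    StrictMonoOn (fun x : ℝ => a * x + b - (e * x + f) ^ 2 / (c * x + d))
      (Set.Ici (0 : ℝ)) := by
  intro x hx y hy hxy
  simp only [Set.mem_Ici] at hx hy
  have h1 : 0 < c * x + d := by positivity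
  have h2 : 0 < c * y + d := by positivity
  have hxy' : 0 < y - x := sub_pos.2 hxy
  have hac : 0 < a * c - e ^ 2 := sub_pos.2 h
  have key : (e * y + f) ^ 2 * (c * x + d) - (e * x + f) ^ 2 * (c * y + d)
      < a * (y - x) * ((c * x + d) * (c * y + d)) := by
    nlinarith [sq_nonneg (e * d - f * c),
      mul_nonneg (mul_nonneg hc.le (mul_nonneg hx hy)) hac.le,
      mul_nonneg (mul_nonneg hd.le (add_nonneg hx hy)) hac.le,
      mul_pos (mul_pos hd hd) hac,
      mul_nonneg (mul_nonneg (mul_nonneg hxy'.le hc.le) (mul_nonneg hx hy)) hac.le,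
      mul_nonneg (mul_nonneg (mul_nonneg hxy'.le hd.le) (add_nonneg hx hy)) hac.le,
      mul_pos (mul_pos hxy' (mul_pos hd hd)) hac,
      mul_nonneg hxy'.le (sq_nonneg (e * d - f * c))]
  simp only
  rw [sub_lt_sub_iff, add_div' _ _ _ h2.ne', add_div' _ _ _ h1.ne',
    div_lt_div_iff₀ h2 h1]
  nlinarith [key]
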